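/- arXiv:2305.18227 — 2 statements merged into one kernel-verified Lean document; each statement's English description precedes it below -/
import Mathlib

section
/- For any instance I=(p_t)_{t∈[n]}, any prediction Î=(p̂_t)_{t∈[n]}, any subset S ⊆ [n], and any partition P of [n] into consecutive intervals, ∑_{L∈P} τ(L, I, I_S ∪ Î_{[n]∖S}) ≤ ∑_{L∈P} τ(L, I, Î). In particular, for every single interval [t1,t2] ⊆ [n], τ([t1,t2], I, I_S ∪ Î_{[n]∖S}) ≤ τ([t1,t2], I, Î). -/
open Finset

/-- Waiting time from `t` until the first acknowledgment in `X` at or after `t` (`0` if none). -/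
noncomputable def ackWait (X : Finset ℕ) (t : ℕ) : ℕ :=
  if h : (X.filter fun x => t ≤ x).Nonempty then (X.filter fun x => t ≤ x).min' h - t else 0

/-- Delay cost `D(I,X)` of solution `X` for the instance `p` on horizon `{a, …, b}`
with delay parameter `d`. -/
noncomputable def delayCost (d : ℝ) (a b : ℕ) (p : ℕ → ℝ) (X : Finset ℕ) : ℝ :=
  (1 / d) * ∑ t ∈ Finset.Icc a b, p t * (ackWait X t : ℝ)

/-- Total cost `F(I,X) = |X| + D(I,X)`. -/
noncomputable def cost (d : ℝ) (a b : ℕ) (p : ℕ → ℝ) (X : Finset ℕ) : ℝ :=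
  (X.card : ℝ) + delayCost d a b p X

/-- Feasibility of `X` for the instance `p` on horizon `{a,…,b}`: `X` is a nonempty subset of
the horizon and every time with positive demand has an acknowledgment at or after it. -/
def Feasible (a b : ℕ) (p : ℕ → ℝ) (X : Finset ℕ) : Prop :=
  X.Nonempty ∧ X ⊆ Finset.Icc a b ∧ ∀ t ∈ Finset.Icc a b, 0 < p t → ∃ x ∈ X, t ≤ x

/-- Optimal cost `opt(I)` of the instance `p` on horizon `{a,…,b}`. -/
noncomputable def opt (d : ℝ) (a b : ℕ) (p : ℕ → ℝ) : ℝ :=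
  sInf {c : ℝ | ∃ X : Finset ℕ, Feasible a b p X ∧ cost d a b p X = c}

/-- `Δ(I,Y,t) = D(I,Y) − D(I,Y ∪ {t})`. -/
noncomputable def delta (d : ℝ) (a b : ℕ) (p : ℕ → ℝ) (Y : Finset ℕ) (t : ℕ) : ℝ :=
  delayCost d a b p Y - delayCost d a b p (insert t Y)

/-- Auxiliary error `τ([t1,t2], I, Î) = opt(O(I⟨t1,t2⟩,Î⟨t1,t2⟩)) − opt(U(I⟨t1,t2⟩,Î⟨t1,t2⟩))`. -/
noncomputable def auxErr (d : ℝ) (t1 t2 : ℕ) (p q : ℕ → ℝ) : ℝ :=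
  opt d t1 t2 (fun t => max (p t) (q t)) - opt d t1 t2 (fun t => min (p t) (q t))

lemma cost_nonneg' (d : ℝ) (hd : 0 < d) (a b : ℕ) (p : ℕ → ℝ) (hp : ∀ t, 0 ≤ p t)
    (X : Finset ℕ) : 0 ≤ cost d a b p X := by
  unfold cost delayCost
  have : 0 ≤ ∑ t ∈ Finset.Icc a b, p t * (ackWait X t : ℝ) :=
    Finset.sum_nonneg fun t _ => mul_nonneg (hp t) (Nat.cast_nonneg _)
  positivity

lemma cost_mono' (d : ℝ) (hd : 0 < d) (a b : ℕ) (p p' : ℕ → ℝ)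
    (hp : ∀ t, 0 ≤ p t) (h : ∀ t, p t ≤ p' t) (X : Finset ℕ) :
    cost d a b p X ≤ cost d a b p' X := by
  unfold cost delayCost
  have hs : ∑ t ∈ Finset.Icc a b, p t * (ackWait X t : ℝ)
      ≤ ∑ t ∈ Finset.Icc a b, p' t * (ackWait X t : ℝ) :=
    Finset.sum_le_sum fun t _ => mul_le_mul_of_nonneg_right (h t) (Nat.cast_nonneg _)
  have hd' : (0:ℝ) ≤ 1 / d := by positivity
  nlinarith [mul_le_mul_of_nonneg_left hs hd']

lemma opt_mono' (d : ℝ) (hd : 0 < d) (a b : ℕ) (hab : a ≤ b) (p p' : ℕ → ℝ)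
    (hp : ∀ t, 0 ≤ p t) (h : ∀ t, p t ≤ p' t) :
    opt d a b p ≤ opt d a b p' := by
  have hfeas' : Feasible a b p' {b} :=
    ⟨Finset.singleton_nonempty b, by simp [Finset.singleton_subset_iff, hab],
      fun t ht _ => ⟨b, Finset.mem_singleton_self b, (Finset.mem_Icc.mp ht).2⟩⟩
  have hne : {c : ℝ | ∃ X : Finset ℕ, Feasible a b p' X ∧ cost d a b p' X = c}.Nonempty :=
    ⟨cost d a b p' {b}, ⟨{b}, hfeas', rfl⟩⟩
  apply le_csInf hne
  rintro c ⟨X, hX, rfl⟩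
  have hXp : Feasible a b p X :=
    ⟨hX.1, hX.2.1, fun t ht hpt => hX.2.2 t ht (lt_of_lt_of_le hpt (h t))⟩
  have hbdd : BddBelow {c : ℝ | ∃ X : Finset ℕ, Feasible a b p X ∧ cost d a b p X = c} := by
    refine ⟨0, ?_⟩
    rintro c ⟨Y, hY, rfl⟩
    exact cost_nonneg' d hd a b p hp Y
  calc opt d a b p ≤ cost d a b p X := csInf_le hbdd ⟨X, hXp, rfl⟩
    _ ≤ cost d a b p' X := cost_mono' d hd a b p p' hp h X

lemma auxErr_mono' (d : ℝ) (hd : 0 < d) (p q : ℕ → ℝ)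
    (hp : ∀ t, 0 ≤ p t) (hq : ∀ t, 0 ≤ q t) (S : Finset ℕ)
    (t1 t2 : ℕ) (hab : t1 ≤ t2) :
    auxErr d t1 t2 p (fun t => if t ∈ S then p t else q t) ≤ auxErr d t1 t2 p q := by
  unfold auxErr
  have h1 : opt d t1 t2 (fun t => max (p t) (if t ∈ S then p t else q t))
      ≤ opt d t1 t2 (fun t => max (p t) (q t)) := by
    apply opt_mono' d hd t1 t2 hab _ _
      (fun t => le_trans (hp t) (le_max_left _ _))
    intro t
    by_cases h : t ∈ S <;> simp [h, le_max_left]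
  have h2 : opt d t1 t2 (fun t => min (p t) (q t))
      ≤ opt d t1 t2 (fun t => min (p t) (if t ∈ S then p t else q t)) := by
    apply opt_mono' d hd t1 t2 hab _ _
      (fun t => le_min (hp t) (hq t))
    intro t
    by_cases h : t ∈ S <;> simp [h, min_le_left]
  linarith

/-- for any subset `S ⊆ [n]` and any partition of `[n]` into consecutive intervals
(given by endpoints `0 = l 0 < l 1 < ⋯ < l m = n`), the partition sum of auxiliary errors does
not increase when the predicted values on `S` are replaced by true demand values; in particular
the same holds for every single interval `[t1,t2] ⊆ [n]`. -/
theorem auxErr_partition_monotone (d : ℝ) (hd : 0 < d) (n : ℕ) (p q : ℕ → ℝ)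
    (hp : ∀ t, 0 ≤ p t) (hq : ∀ t, 0 ≤ q t)
    (S : Finset ℕ) (hS : S ⊆ Finset.Icc 1 n) :
    (∀ (m : ℕ) (l : ℕ → ℕ), 0 < m → l 0 = 0 → l m = n → (∀ i < m, l i < l (i + 1)) →
      ∑ i ∈ Finset.range m, auxErr d (l i + 1) (l (i + 1)) p (fun t => if t ∈ S then p t else q t)
        ≤ ∑ i ∈ Finset.range m, auxErr d (l i + 1) (l (i + 1)) p q)
    ∧ (∀ t1 t2 : ℕ, 1 ≤ t1 → t1 ≤ t2 → t2 ≤ n →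
      auxErr d t1 t2 p (fun t => if t ∈ S then p t else q t) ≤ auxErr d t1 t2 p q) := by
  constructor
  · intro m l _ _ _ hl
    apply Finset.sum_le_sum
    intro i hi
    exact auxErr_mono' d hd p q hp hq S _ _ (hl i (Finset.mem_range.mp hi))
  · intro t1 t2 _ h12 _
    exact auxErr_mono' d hd p q hp hq S t1 t2 h12
end

section
/- For every integer n ≥ 2, every d > 0, and every ε > 0 with ε·n(n−1)/(2d) < 1, the instance I with p_t = ε for all t ∈ [n] and the prediction Î with p̂_t = 0 for t ∈ [n−1] and p̂_n = ε satisfy opt(I) = 1 + εn(n−1)/(2d) and opt(Î) = 1; hence opt(I) − opt(Î) = (n/(2d))·∑_{t∈[n]} |p_t − p̂_t| > 0. Consequently, the ℓ1-norm error measure err(I,Î) = ∑_{t}|p_t − p̂_t| violates Lipschitzness: there is no constant c independent of n such that |opt(I) − opt(Î)| ≤ c·err(I,Î) for all instances and predictions. -/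
open Finset

open Finset

/-! The single acknowledgment at the horizon's end `n` is optimal for both instances: any other
feasible solution has at least two acknowledgments, which already costs more. It leaves the
all-`ε` instance with delay `ε·n(n−1)/(2d)` and the prediction with no delay, whereas the two
instances differ by only `(n−1)·ε` in `ℓ1`. The ratio `n/(2d)` is unbounded in `n`. -/

lemma ackWait_eq_zero_of_mem {X : Finset ℕ} {t : ℕ} (ht : t ∈ X) : ackWait X t = 0 := by
  have hmem : t ∈ X.filter fun x => t ≤ x := mem_filter.mpr ⟨ht, le_rfl⟩
  rw [ackWait, dif_pos ⟨t, hmem⟩]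
  have := min'_le _ _ hmem
  omega

lemma ackWait_singleton {b t : ℕ} (h : t ≤ b) : ackWait {b} t = b - t := by
  simp [ackWait, filter_singleton, h]

lemma sum_Icc_sub_mul_two (n : ℕ) : (∑ t ∈ Icc 1 n, (n - t)) * 2 = n * (n - 1) := by
  have := sum_Ico_reflect id 1 (le_refl (n + 1))
  simp only [id, Nat.sub_self, Nat.add_sub_cancel, Ico_add_one_right_eq_Icc] at this
  rw [this, ← range_eq_Ico, sum_range_id_mul_two]

section Cost

variable {d : ℝ} {a b : ℕ} {p : ℕ → ℝ} {X : Finset ℕ}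

lemma feasible_singleton_top (hab : a ≤ b) : Feasible a b p {b} :=
  ⟨singleton_nonempty b, singleton_subset_iff.mpr (mem_Icc.mpr ⟨hab, le_rfl⟩),
    fun _ ht _ => ⟨b, mem_singleton_self b, (mem_Icc.mp ht).2⟩⟩

lemma delayCost_nonneg (hd : 0 ≤ d) (hp : ∀ t ∈ Icc a b, 0 ≤ p t) : 0 ≤ delayCost d a b p X :=
  mul_nonneg (one_div_nonneg.mpr hd) (sum_nonneg fun t ht => mul_nonneg (hp t ht) (by positivity))

lemma card_le_cost (hd : 0 ≤ d) (hp : ∀ t ∈ Icc a b, 0 ≤ p t) : (X.card : ℝ) ≤ cost d a b p X :=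
  le_add_of_nonneg_right (delayCost_nonneg hd hp)

lemma eq_singleton_top_of_feasible_of_card_eq_one (hX : Feasible a b p X) (hpb : 0 < p b)
    (hab : a ≤ b) (hcard : X.card = 1) : X = {b} := by
  obtain ⟨x, rfl⟩ := card_eq_one.mp hcard
  obtain ⟨y, hy, hby⟩ := hX.2.2 b (mem_Icc.mpr ⟨hab, le_rfl⟩) hpb
  have hxb := (mem_Icc.mp (hX.2.1 (mem_singleton_self x))).2
  rw [mem_singleton.mp hy] at hby
  rw [le_antisymm hxb hby]

/-- Any solution with two or more acknowledgments costs at least `2`. -/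
lemma opt_eq_cost_singleton_top (hab : a ≤ b) (hd : 0 ≤ d) (hp : ∀ t ∈ Icc a b, 0 ≤ p t)
    (hpb : 0 < p b) (hcost : cost d a b p {b} ≤ 2) : opt d a b p = cost d a b p {b} := by
  refine IsLeast.csInf_eq ⟨⟨{b}, feasible_singleton_top hab, rfl⟩, ?_⟩
  rintro _ ⟨X, hX, rfl⟩
  rcases Nat.lt_or_ge X.card 2 with hcard | hcard
  · have hcard1 : X.card = 1 := by have := card_pos.mpr hX.1; omega
    rw [eq_singleton_top_of_feasible_of_card_eq_one hX hpb hab hcard1]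
  · calc cost d a b p {b} ≤ 2 := hcost
      _ ≤ X.card := by exact_mod_cast hcard
      _ ≤ cost d a b p X := card_le_cost hd hp

end Cost

lemma cost_const_singleton_top (d ε : ℝ) {n : ℕ} (hn : 1 ≤ n) :
    cost d 1 n (fun _ => ε) {n} = 1 + ε * n * (n - 1) / (2 * d) := by
  have hwait : ∑ t ∈ Icc 1 n, ε * (ackWait {n} t : ℝ) = ε * ↑(∑ t ∈ Icc 1 n, (n - t)) := by
    rw [Nat.cast_sum, mul_sum]
    exact sum_congr rfl fun t ht => by rw [ackWait_singleton (mem_Icc.mp ht).2]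
  have hgauss : ((∑ t ∈ Icc 1 n, (n - t) : ℕ) : ℝ) * 2 = n * (n - 1) := by
    have := sum_Icc_sub_mul_two n
    rw [← Nat.cast_one (R := ℝ), ← Nat.cast_sub hn]
    exact_mod_cast this
  rw [cost, delayCost, hwait, card_singleton, Nat.cast_one]
  linear_combination (ε / (2 * d)) * hgauss

lemma cost_top_singleton_top (d ε : ℝ) (a b : ℕ) :
    cost d a b (fun t => if t = b then ε else 0) {b} = 1 := by
  have hdelay : ∀ t ∈ Icc a b, (if t = b then ε else 0) * (ackWait {b} t : ℝ) = 0 := by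
    intro t _
    split_ifs with h
    · rw [h, ackWait_eq_zero_of_mem (mem_singleton_self b), Nat.cast_zero, mul_zero]
    · exact zero_mul _
  rw [cost, delayCost, sum_eq_zero hdelay, card_singleton]
  simp

lemma opt_const {n : ℕ} (hn : 1 ≤ n) {d ε : ℝ} (hd : 0 ≤ d) (hε : 0 < ε)
    (hsmall : ε * n * (n - 1) / (2 * d) ≤ 1) :
    opt d 1 n (fun _ => ε) = 1 + ε * n * (n - 1) / (2 * d) := by
  have hcost := cost_const_singleton_top d ε hn
  rw [opt_eq_cost_singleton_top hn hd (fun _ _ => hε.le) hε (by rw [hcost]; linarith), hcost]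

lemma opt_top {a b : ℕ} (hab : a ≤ b) {d ε : ℝ} (hd : 0 ≤ d) (hε : 0 < ε) :
    opt d a b (fun t => if t = b then ε else 0) = 1 := by
  have hp : ∀ t ∈ Icc a b, 0 ≤ if t = b then ε else 0 := fun _ _ => by
    split_ifs <;> [exact hε.le; exact le_rfl]
  have hcost := cost_top_singleton_top d ε a b
  rw [opt_eq_cost_singleton_top hab hd hp (by simpa using hε) (by rw [hcost]; norm_num), hcost]

lemma sum_abs_sub_top {n : ℕ} (hn : 1 ≤ n) {ε : ℝ} (hε : 0 ≤ ε) :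
    ∑ t ∈ Icc 1 n, |ε - (if t = n then ε else 0)| = (n - 1) * ε := by
  have hsummand : ∀ t ∈ Icc 1 n, |ε - (if t = n then ε else 0)| = ε - if t = n then ε else 0 :=
    fun t _ => abs_of_nonneg (by split_ifs <;> linarith)
  rw [sum_congr rfl hsummand, sum_sub_distrib, sum_const, Nat.card_Icc, sum_ite_eq',
    if_pos (mem_Icc.mpr ⟨hn, le_rfl⟩), nsmul_eq_mul, Nat.add_sub_cancel]
  ring

lemma opt_const_sub_opt_top {n : ℕ} (hn : 1 ≤ n) {d ε : ℝ} (hd : 0 ≤ d) (hε : 0 < ε)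
    (hsmall : ε * n * (n - 1) / (2 * d) ≤ 1) :
    opt d 1 n (fun _ => ε) - opt d 1 n (fun t => if t = n then ε else 0)
      = ((n : ℝ) / (2 * d)) * ∑ t ∈ Icc 1 n, |ε - (if t = n then ε else 0)| := by
  rw [opt_const hn hd hε hsmall, opt_top hn hd hε, sum_abs_sub_top hn hε.le]
  ring

/-- On horizon `m` with demand `ε = d/m²`, the ratio of the gap in `opt` to the `ℓ1` error
is `m/(2d)`, so any Lipschitz constant would have to be at least that. -/
lemma not_exists_l1_lipschitz_const {d : ℝ} (hd : 0 < d) :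
    ¬ ∃ c : ℝ, ∀ (m : ℕ) (p q : ℕ → ℝ), (∀ t, 0 ≤ p t) → (∀ t, 0 ≤ q t) →
        |opt d 1 m p - opt d 1 m q| ≤ c * ∑ t ∈ Icc 1 m, |p t - q t| := by
  rintro ⟨c, hc⟩
  obtain ⟨m, hm⟩ := exists_nat_gt (max 2 (2 * d * c))
  have hm2 : (2 : ℝ) < m := (le_max_left _ _).trans_lt hm
  have hmc : 2 * d * c < m := (le_max_right _ _).trans_lt hm
  have hm1 : 1 ≤ m := by exact_mod_cast (by linarith : (1 : ℝ) ≤ m)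
  set ε : ℝ := d / m ^ 2
  have hε : 0 < ε := by positivity
  have hsmall : ε * m * (m - 1) / (2 * d) ≤ 1 := by
    rw [div_le_one (by positivity)]
    have : ε * m * m = d := by simp only [ε]; field_simp
    nlinarith
  have hlip := hc m (fun _ => ε) (fun t => if t = m then ε else 0) (fun _ => hε.le)
    (fun t => by split_ifs <;> [exact hε.le; exact le_rfl])
  have herr : 0 < ∑ t ∈ Icc 1 m, |ε - (if t = m then ε else 0)| := by
    rw [sum_abs_sub_top hm1 hε.le]
    exact mul_pos (by linarith) hε
  rw [opt_const_sub_opt_top hm1 hd.le hε hsmall, abs_of_nonneg (by positivity)] at hlip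
  have hratio : (m : ℝ) / (2 * d) ≤ c := le_of_mul_le_mul_right hlip herr
  rw [div_le_iff₀ (by positivity)] at hratio
  linarith

/-- for `n ≥ 2`, `d > 0`, `ε > 0` with `ε·n(n−1)/(2d) < 1`, the instance
`p_t = ε` on `[n]` and prediction `p̂_t = 0` for `t < n`, `p̂_n = ε` satisfy
`opt(I) = 1 + εn(n−1)/(2d)`, `opt(Î) = 1`, hence the gap equals `(n/(2d))·ℓ1(I,Î) > 0`;
consequently, the `ℓ1`-norm error measure violates Lipschitzness: no constant `c` independent
of the horizon length satisfies `|opt(I) − opt(Î)| ≤ c·∑_t |p_t − p̂_t|` for all instances and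
predictions. -/
theorem l1_error_violates_lipschitz (n : ℕ) (hn : 2 ≤ n) (d ε : ℝ) (hd : 0 < d) (hε : 0 < ε)
    (hsmall : ε * n * (n - 1) / (2 * d) < 1) :
    (opt d 1 n (fun _ => ε) = 1 + ε * n * (n - 1) / (2 * d)
      ∧ opt d 1 n (fun t => if t = n then ε else 0) = 1
      ∧ opt d 1 n (fun _ => ε) - opt d 1 n (fun t => if t = n then ε else 0)
          = ((n : ℝ) / (2 * d)) * ∑ t ∈ Finset.Icc 1 n, |ε - (if t = n then ε else 0)|
      ∧ 0 < opt d 1 n (fun _ => ε) - opt d 1 n (fun t => if t = n then ε else 0))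
    ∧ ¬ ∃ c : ℝ, ∀ (m : ℕ) (p q : ℕ → ℝ), (∀ t, 0 ≤ p t) → (∀ t, 0 ≤ q t) →
        |opt d 1 m p - opt d 1 m q| ≤ c * ∑ t ∈ Finset.Icc 1 m, |p t - q t| := by
  have hn1 : 1 ≤ n := by omega
  have hn2 : (2 : ℝ) ≤ n := by exact_mod_cast hn
  have hconst := opt_const hn1 hd.le hε hsmall.le
  have htop := opt_top hn1 hd.le hε
  refine ⟨⟨hconst, htop, opt_const_sub_opt_top hn1 hd.le hε hsmall.le, ?_⟩,
    not_exists_l1_lipschitz_const hd⟩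
  rw [hconst, htop, add_sub_cancel_left]
  exact div_pos (mul_pos (mul_pos hε (by linarith)) (by linarith)) (by positivity)
end
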